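/- One-step ISS contraction (intermediate claim in the proof of Theorem 1): set σ̄_f = σ(‖[W_f U_f b_f]‖_∞) and σ̄_z = σ(‖[W_z U_z b_z]‖_∞), and suppose ‖U_r‖_∞ σ̄_f < 1. Then there exists δ ∈ (0,1) such that for every u ∈ ℝ^{n_u} with ‖u‖_∞ ≤ 1 and every x ∈ ℝ^{n_x} with ‖x‖_∞ ≤ 1, the GRU successor state satisfies ‖x⁺‖_∞ ≤ (1 − δ) ‖x‖_∞ + σ̄_z ‖W_r‖_∞ ‖u‖_∞ + σ̄_z ‖b_r‖_∞. -/

import Mathlib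

open Real Filter

/-- The sigmoid activation function. -/
noncomputable def sigmoid (s : ℝ) : ℝ := 1 / (1 + Real.exp (-s))

/-- Induced infinity norm of a matrix (maximum absolute row sum). -/
noncomputable def matNorm {n m : ℕ} (A : Matrix (Fin n) (Fin m) ℝ) : ℝ :=
  ⨆ i, ∑ j, |A i j|

/-- Infinity norm of the horizontal concatenation `[A B c]`
(maximum absolute row sum of the concatenated matrix). -/
noncomputable def catNorm {n m p : ℕ} (A : Matrix (Fin n) (Fin m) ℝ)
    (B : Matrix (Fin n) (Fin p) ℝ) (c : Fin n → ℝ) : ℝ :=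
  ⨆ i, (∑ j, |A i j| + ∑ j, |B i j| + |c i|)

/-- One step of the single-layer GRU:
`x⁺ = z ∘ x + (1 - z) ∘ tanh(W_r u + U_r (f ∘ x) + b_r)`,
`z = σ(W_z u + U_z x + b_z)`, `f = σ(W_f u + U_f x + b_f)`. -/
noncomputable def gruStep {nu nx : ℕ}
    (Wz Wf Wr : Matrix (Fin nx) (Fin nu) ℝ)
    (Uz Uf Ur : Matrix (Fin nx) (Fin nx) ℝ)
    (bz bf br : Fin nx → ℝ)
    (u : Fin nu → ℝ) (x : Fin nx → ℝ) : Fin nx → ℝ :=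
  let z : Fin nx → ℝ := fun i => _root_.sigmoid ((Wz.mulVec u + Uz.mulVec x + bz) i)
  let f : Fin nx → ℝ := fun i => _root_.sigmoid ((Wf.mulVec u + Uf.mulVec x + bf) i)
  let r : Fin nx → ℝ := fun i => Real.tanh ((Wr.mulVec u + Ur.mulVec (f * x) + br) i)
  fun j => z j * x j + (1 - z j) * r j


/-!
Coordinatewise, `x⁺_j` mixes `x_j` and a `tanh` candidate with weights `z_j` and `1 - z_j`.
On the unit ball the gate pre-activations are bounded by `‖[W U b]‖_∞`, so both weights are at
most `σ̄_z`, and the reset gate scales `x` by at most `σ̄_f`. As `|tanh s| ≤ |s|`, the candidate is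
bounded by `‖W_r‖ ‖u‖ + ‖U_r‖ σ̄_f ‖x‖ + ‖b_r‖`, and mixing gives the contraction factor
`1 - δ` with `δ = (1 - σ̄_z)(1 - ‖U_r‖ σ̄_f)`.
-/

open Matrix

lemma sigmoid_eq_real_sigmoid : _root_.sigmoid = Real.sigmoid :=
  funext fun _ => one_div _

namespace Real

lemma sigmoid_le_of_abs_le {s t : ℝ} (h : |s| ≤ t) : sigmoid s ≤ sigmoid t :=
  sigmoid_le ((le_abs_self s).trans h)

lemma one_sub_sigmoid_le_of_abs_le {s t : ℝ} (h : |s| ≤ t) : 1 - sigmoid s ≤ sigmoid t := by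
  rw [← sigmoid_neg]
  exact sigmoid_le ((neg_le_abs s).trans h)

/-- `t ↦ t cosh t - sinh t` vanishes at `0` and has derivative `t sinh t ≥ 0` on `[0, ∞)`. -/
lemma sinh_le_mul_cosh {x : ℝ} (hx : 0 ≤ x) : sinh x ≤ x * cosh x := by
  have hderiv : ∀ t : ℝ, HasDerivAt (fun t => t * cosh t - sinh t) (t * sinh t) t := fun t =>
    (((hasDerivAt_id' t).mul (hasDerivAt_cosh t)).sub (hasDerivAt_sinh t)).congr_deriv (by ring)
  have hmono : MonotoneOn (fun t => t * cosh t - sinh t) (Set.Ici 0) := by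
    refine monotoneOn_of_deriv_nonneg (convex_Ici 0)
      (fun t _ => (hderiv t).continuousAt.continuousWithinAt)
      (fun t _ => (hderiv t).differentiableAt.differentiableWithinAt) fun t ht => ?_
    rw [interior_Ici, Set.mem_Ioi] at ht
    rw [(hderiv t).deriv]
    exact mul_nonneg ht.le (sinh_nonneg_iff.2 ht.le)
  simpa using hmono Set.self_mem_Ici hx hx

lemma abs_tanh_le_abs (x : ℝ) : |tanh x| ≤ |x| := by
  have key : ∀ t : ℝ, 0 ≤ t → |tanh t| ≤ t := fun t ht => by
    have htanh : 0 ≤ tanh t := by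
      rw [tanh_eq_sinh_div_cosh]
      exact div_nonneg (sinh_nonneg_iff.2 ht) (cosh_pos t).le
    rw [abs_of_nonneg htanh, tanh_eq_sinh_div_cosh, div_le_iff₀ (cosh_pos t)]
    exact sinh_le_mul_cosh ht
  rcases le_total 0 x with hx | hx
  · rw [abs_of_nonneg hx]
    exact key x hx
  · simpa [tanh_neg, abs_of_nonpos hx] using key (-x) (neg_nonneg.2 hx)

end Real

section MatrixNorms

variable {m n p : ℕ}

lemma sum_abs_le_matNorm (A : Matrix (Fin m) (Fin n) ℝ) (i : Fin m) :
    ∑ j, |A i j| ≤ matNorm A :=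
  le_ciSup (f := fun i => ∑ j, |A i j|) (Set.finite_range _).bddAbove i

lemma matNorm_nonneg (A : Matrix (Fin m) (Fin n) ℝ) : 0 ≤ matNorm A :=
  Real.iSup_nonneg fun _ => Finset.sum_nonneg fun _ _ => abs_nonneg _

lemma sum_abs_add_sum_abs_add_abs_le_catNorm (A : Matrix (Fin m) (Fin n) ℝ)
    (B : Matrix (Fin m) (Fin p) ℝ) (c : Fin m → ℝ) (i : Fin m) :
    ∑ j, |A i j| + ∑ j, |B i j| + |c i| ≤ catNorm A B c :=
  le_ciSup (f := fun i => ∑ j, |A i j| + ∑ j, |B i j| + |c i|) (Set.finite_range _).bddAbove i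

lemma abs_mulVec_apply_le {ι κ : Type*} [Fintype κ] (A : Matrix ι κ ℝ) (v : κ → ℝ) (i : ι) :
    |(A *ᵥ v) i| ≤ (∑ j, |A i j|) * ‖v‖ :=
  calc |(A *ᵥ v) i| ≤ ∑ j, |A i j * v j| :=
        Finset.abs_sum_le_sum_abs (fun j => A i j * v j) Finset.univ
    _ ≤ ∑ j, |A i j| * ‖v‖ := by
        gcongr with j
        rw [abs_mul]
        exact mul_le_mul_of_nonneg_left (norm_le_pi_norm v j) (abs_nonneg _)
    _ = (∑ j, |A i j|) * ‖v‖ := (Finset.sum_mul ..).symm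

lemma norm_mulVec_le_matNorm (A : Matrix (Fin m) (Fin n) ℝ) (v : Fin n → ℝ) :
    ‖A *ᵥ v‖ ≤ matNorm A * ‖v‖ :=
  (pi_norm_le_iff_of_nonneg (mul_nonneg (matNorm_nonneg A) (norm_nonneg v))).2 fun i =>
    (abs_mulVec_apply_le A v i).trans
      (mul_le_mul_of_nonneg_right (sum_abs_le_matNorm A i) (norm_nonneg v))

lemma abs_affine_apply_le_catNorm (A : Matrix (Fin m) (Fin n) ℝ) (B : Matrix (Fin m) (Fin p) ℝ)
    (c : Fin m → ℝ) {u : Fin n → ℝ} {x : Fin p → ℝ} (hu : ‖u‖ ≤ 1) (hx : ‖x‖ ≤ 1) (i : Fin m) :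
    |(A *ᵥ u + B *ᵥ x + c) i| ≤ catNorm A B c := by
  have hAu : |(A *ᵥ u) i| ≤ ∑ j, |A i j| :=
    (abs_mulVec_apply_le A u i).trans (mul_le_of_le_one_right (by positivity) hu)
  have hBx : |(B *ᵥ x) i| ≤ ∑ j, |B i j| :=
    (abs_mulVec_apply_le B x i).trans (mul_le_of_le_one_right (by positivity) hx)
  calc |(A *ᵥ u + B *ᵥ x + c) i| ≤ |(A *ᵥ u) i| + |(B *ᵥ x) i| + |c i| := abs_add_three _ _ _
    _ ≤ catNorm A B c := by
        linarith [sum_abs_add_sum_abs_add_abs_le_catNorm A B c i]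

end MatrixNorms

lemma norm_sigmoid_comp_le {ι : Type*} [Fintype ι] {v : ι → ℝ} {t : ℝ} (h : ∀ i, |v i| ≤ t) :
    ‖fun i => Real.sigmoid (v i)‖ ≤ Real.sigmoid t :=
  (pi_norm_le_iff_of_nonneg (Real.sigmoid_nonneg t)).2 fun i => by
    rw [Real.norm_eq_abs, abs_of_pos (Real.sigmoid_pos _)]
    exact Real.sigmoid_le_of_abs_le (h i)

lemma abs_gate_mix_le {z σ a X c y T : ℝ} (hz : 0 ≤ z) (hz' : 0 ≤ 1 - z) (hzσ : z ≤ σ)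
    (hzσ' : 1 - z ≤ σ) (ha : a ≤ 1) (hc : 0 ≤ c) (hy : |y| ≤ X) (hT : |T| ≤ a * X + c) :
    |z * y + (1 - z) * T| ≤ (1 - (1 - σ) * (1 - a)) * X + σ * c := by
  have hX : 0 ≤ X := (abs_nonneg y).trans hy
  calc |z * y + (1 - z) * T| ≤ z * |y| + (1 - z) * |T| := by
        simpa only [abs_mul, abs_of_nonneg hz, abs_of_nonneg hz'] using
          abs_add_le (z * y) ((1 - z) * T)
    _ ≤ z * X + (1 - z) * (a * X + c) := by gcongr
    _ = (1 - (1 - z) * (1 - a)) * X + (1 - z) * c := by ring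
    _ ≤ (1 - (1 - σ) * (1 - a)) * X + σ * c := by gcongr

section GRU

variable {nu nx : ℕ} (Wz Wf Wr : Matrix (Fin nx) (Fin nu) ℝ)
  (Uz Uf Ur : Matrix (Fin nx) (Fin nx) ℝ) (bz bf br : Fin nx → ℝ) {u : Fin nu → ℝ} {x : Fin nx → ℝ}

lemma abs_tanh_candidate_le {f : Fin nx → ℝ} {σf : ℝ} (hf : ‖f‖ ≤ σf) (j : Fin nx) :
    |tanh ((Wr *ᵥ u + Ur *ᵥ (f * x) + br) j)| ≤
      matNorm Ur * σf * ‖x‖ + (matNorm Wr * ‖u‖ + ‖br‖) :=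
  calc |tanh ((Wr *ᵥ u + Ur *ᵥ (f * x) + br) j)|
      ≤ ‖Wr *ᵥ u + Ur *ᵥ (f * x) + br‖ :=
        (abs_tanh_le_abs _).trans (norm_le_pi_norm (Wr *ᵥ u + Ur *ᵥ (f * x) + br) j)
    _ ≤ ‖Wr *ᵥ u‖ + ‖Ur *ᵥ (f * x)‖ + ‖br‖ := norm_add₃_le
    _ ≤ matNorm Wr * ‖u‖ + matNorm Ur * (σf * ‖x‖) + ‖br‖ := by
        gcongr
        · exact norm_mulVec_le_matNorm Wr u
        · refine (norm_mulVec_le_matNorm Ur _).trans ?_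
          gcongr
          · exact matNorm_nonneg Ur
          · exact (norm_mul_le f x).trans (by gcongr)
    _ = matNorm Ur * σf * ‖x‖ + (matNorm Wr * ‖u‖ + ‖br‖) := by ring

lemma abs_gruStep_apply_le (hu : ‖u‖ ≤ 1) (hx : ‖x‖ ≤ 1)
    (ha : matNorm Ur * Real.sigmoid (catNorm Wf Uf bf) ≤ 1) (j : Fin nx) :
    |gruStep Wz Wf Wr Uz Uf Ur bz bf br u x j| ≤
      (1 - (1 - Real.sigmoid (catNorm Wz Uz bz)) *
        (1 - matNorm Ur * Real.sigmoid (catNorm Wf Uf bf))) * ‖x‖ +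
        Real.sigmoid (catNorm Wz Uz bz) * (matNorm Wr * ‖u‖ + ‖br‖) := by
  simp only [gruStep, sigmoid_eq_real_sigmoid]
  have hz := abs_affine_apply_le_catNorm Wz Uz bz hu hx j
  have hf := norm_sigmoid_comp_le (abs_affine_apply_le_catNorm Wf Uf bf hu hx)
  exact abs_gate_mix_le (Real.sigmoid_nonneg _) (sub_nonneg.2 (Real.sigmoid_le_one _))
    (Real.sigmoid_le_of_abs_le hz) (Real.one_sub_sigmoid_le_of_abs_le hz) ha
    (add_nonneg (mul_nonneg (matNorm_nonneg Wr) (norm_nonneg u)) (norm_nonneg br))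
    (norm_le_pi_norm x j) (abs_tanh_candidate_le Wr Ur br hf j)

end GRU

/-- **One-step ISS contraction (intermediate claim in the proof of Theorem 1).**
With `σ̄_f = σ(‖[W_f U_f b_f]‖_∞)` and `σ̄_z = σ(‖[W_z U_z b_z]‖_∞)`, if
`‖U_r‖_∞ σ̄_f < 1` then there exists `δ ∈ (0,1)` such that for all unity-bounded `u`, `x`,
`‖x⁺‖_∞ ≤ (1 - δ) ‖x‖_∞ + σ̄_z ‖W_r‖_∞ ‖u‖_∞ + σ̄_z ‖b_r‖_∞`. -/
theorem gru_one_step_ISS_contraction {nu nx : ℕ}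
    (Wz Wf Wr : Matrix (Fin nx) (Fin nu) ℝ)
    (Uz Uf Ur : Matrix (Fin nx) (Fin nx) ℝ)
    (bz bf br : Fin nx → ℝ)
    (hcond : matNorm Ur * _root_.sigmoid (catNorm Wf Uf bf) < 1) :
    ∃ δ : ℝ, 0 < δ ∧ δ < 1 ∧
      ∀ u : Fin nu → ℝ, ‖u‖ ≤ 1 → ∀ x : Fin nx → ℝ, ‖x‖ ≤ 1 →
        ‖gruStep Wz Wf Wr Uz Uf Ur bz bf br u x‖ ≤
          (1 - δ) * ‖x‖ + _root_.sigmoid (catNorm Wz Uz bz) * matNorm Wr * ‖u‖ +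
            _root_.sigmoid (catNorm Wz Uz bz) * ‖br‖ := by
  rw [sigmoid_eq_real_sigmoid] at hcond ⊢
  set σz := Real.sigmoid (catNorm Wz Uz bz)
  set a := matNorm Ur * Real.sigmoid (catNorm Wf Uf bf)
  have hσz : 0 < σz ∧ σz < 1 := ⟨Real.sigmoid_pos _, Real.sigmoid_lt_one _⟩
  have ha : 0 ≤ a := mul_nonneg (matNorm_nonneg Ur) (Real.sigmoid_nonneg _)
  have hδ : (1 - σz) * (1 - a) < 1 :=
    mul_lt_one_of_nonneg_of_lt_one_left (by linarith) (by linarith) (by linarith)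
  refine ⟨(1 - σz) * (1 - a), mul_pos (by linarith) (by linarith), hδ, fun u hu x hx => ?_⟩
  refine (pi_norm_le_iff_of_nonneg ?_).2 fun j =>
    (abs_gruStep_apply_le Wz Wf Wr Uz Uf Ur bz bf br hu hx hcond.le j).trans_eq (by ring)
  have := mul_nonneg (sub_pos.2 hδ).le (norm_nonneg x)
  have := mul_nonneg (mul_nonneg hσz.1.le (matNorm_nonneg Wr)) (norm_nonneg u)
  have := mul_nonneg hσz.1.le (norm_nonneg br)
  linarith
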